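/- Let C be a clause satisfying the QEALM clause condition. Then some variable occurs in every literal of C if and only if every pair of literals of C shares a variable (in particular, every literal of C contains at least one variable). -/
import Mathlib


/-- Terms over variables `V` and constant symbols `K`
(Bernays–Schönfinkel: the only function symbols are constants). -/
inductive Trm (V K : Type) : Type where
  | var : V → Trm V K
  | const : K → Trm V K
deriving DecidableEq

/-- A first-order literal (no equality): a polarity, a predicate symbol
and a list of argument terms. -/
structure Lit (V K P : Type) : Type where
  pol : Bool
  pred : P
  args : List (Trm V K)
deriving DecidableEq

/-- A clause is a (finite) set of literals, read disjunctively. -/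
abbrev Clause (V K P : Type) := Finset (Lit V K P)

/-- A CNF is a list of clauses, read conjunctively,
with all variables universally quantified. -/
abbrev CNF (V K P : Type) := List (Clause V K P)

variable {V K P : Type}

/-- The argument of a literal at the (1-based) position `i`. -/
def Lit.argAt (l : Lit V K P) : ℕ → Option (Trm V K)
  | 0 => none
  | i + 1 => l.args[i]?

/-- Variable `u` occurs at argument position `i` of the literal `l`. -/
def Lit.varAt (l : Lit V K P) (u : V) (i : ℕ) : Prop := l.argAt i = some (Trm.var u)

/-- Variable `u` occurs in the literal `l`. -/
def Lit.hasVar (l : Lit V K P) (u : V) : Prop := ∃ i, l.varAt u i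

/-- `i` is the least argument position at which `u` occurs in `l`. -/
def Lit.firstOccAt (l : Lit V K P) (u : V) (i : ℕ) : Prop :=
  l.varAt u i ∧ ∀ j, l.varAt u j → i ≤ j

/-- The QEALM clause condition: whenever a variable `u` occurs in several
literals of the clause, the least position at which it occurs is the same in
all these literals, and these literals agree on all argument positions up to
(and including) that one (a shared initial segment). -/
def QEALMClause (C : Clause V K P) : Prop :=
  ∀ (u : V), ∀ l₁ ∈ C, ∀ l₂ ∈ C, l₁.hasVar u → l₂.hasVar u →
    ∃ i, l₁.firstOccAt u i ∧ l₂.firstOccAt u i ∧ ∀ j ≤ i, l₁.argAt j = l₂.argAt j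

/-- A CNF is in the QEALM fragment iff every clause satisfies the QEALM clause condition. -/
def QEALM (φ : CNF V K P) : Prop := ∀ C ∈ φ, QEALMClause C

/-- A first-order structure for the signature `(K, P)` (no equality). -/
structure Model (K P : Type) : Type 1 where
  Dom : Type
  dne : Nonempty Dom
  constVal : K → Dom
  predVal : P → List Dom → Prop

/-- Value of a term in a model under a variable assignment. -/
def Trm.val (M : Model K P) (ρ : V → M.Dom) : Trm V K → M.Dom
  | .var u => ρ u
  | .const c => M.constVal c

/-- Truth of a literal in a model under a variable assignment. -/
def Lit.holds (M : Model K P) (ρ : V → M.Dom) (l : Lit V K P) : Prop :=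
  if l.pol then M.predVal l.pred (l.args.map (Trm.val M ρ))
  else ¬ M.predVal l.pred (l.args.map (Trm.val M ρ))

/-- Truth of a clause (a disjunction of literals). -/
def Clause.holds (M : Model K P) (ρ : V → M.Dom) (C : Clause V K P) : Prop :=
  ∃ l ∈ C, l.holds M ρ

/-- First-order satisfiability (without equality) of a universally quantified CNF. -/
def CNF.Satisfiable (φ : CNF V K P) : Prop :=
  ∃ M : Model K P, ∀ ρ : V → M.Dom, ∀ C ∈ φ, C.holds M ρ

/-- Applying a substitution to a term. -/
def Trm.subst (σ : V → Trm V K) : Trm V K → Trm V K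
  | .var u => σ u
  | .const c => .const c

/-- Applying a substitution to a literal. -/
def Lit.subst (σ : V → Trm V K) (l : Lit V K P) : Lit V K P :=
  ⟨l.pol, l.pred, l.args.map (Trm.subst σ)⟩

/-- Applying a substitution to a clause. -/
def Clause.subst [DecidableEq V] [DecidableEq K] [DecidableEq P]
    (σ : V → Trm V K) (C : Clause V K P) : Clause V K P :=
  C.image (Lit.subst σ)

/-- Applying a substitution to a CNF. -/
def CNF.subst [DecidableEq V] [DecidableEq K] [DecidableEq P]
    (σ : V → Trm V K) (φ : CNF V K P) : CNF V K P :=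
  φ.map (Clause.subst σ)

/-- An outer variable of a clause: a variable appearing in every literal of the clause. -/
def OuterVar (C : Clause V K P) (u : V) : Prop := ∀ l ∈ C, l.hasVar u

/-- `i` is the least position of an occurrence of `u` in any literal of `C`. -/
def LeastOccIn (C : Clause V K P) (u : V) (i : ℕ) : Prop :=
  (∃ l ∈ C, l.varAt u i) ∧ ∀ j, (∃ l ∈ C, l.varAt u j) → i ≤ j

/-- `i` is an outer position of the clause `C`. -/
def OuterPosClause (C : Clause V K P) (i : ℕ) : Prop :=
  ∃ u : V, OuterVar C u ∧ LeastOccIn C u i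

/-- `i` is a neutral position of the clause `C`: some term `t`, a constant or an
outer variable of `C`, occupies the `i`-th argument of every literal of `C`. -/
def NeutralPos (C : Clause V K P) (i : ℕ) : Prop :=
  ∃ t : Trm V K,
    ((∃ c, t = Trm.const c) ∨ (∃ u, t = Trm.var u ∧ OuterVar C u)) ∧
    ∀ l ∈ C, l.argAt i = some t

/-- `i` is an outer position of the CNF `φ`: an outer position of some clause and a
neutral position of every clause. -/
def OuterPosCNF (φ : CNF V K P) (i : ℕ) : Prop :=
  (∃ C ∈ φ, OuterPosClause C i) ∧ ∀ D ∈ φ, NeutralPos D i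

/-- Variable `u` occurs at argument position `i` in some literal of `φ`. -/
def VarOccursAt (φ : CNF V K P) (u : V) (i : ℕ) : Prop :=
  ∃ C ∈ φ, ∃ l ∈ C, l.varAt u i

/-- `σ` is the substitution that replaces every variable occurring at an argument
position `i` that is an outer position of `φ` by the constant `c i`, and leaves
all other variables unchanged. -/
def IsOuterSubst (φ : CNF V K P) (c : ℕ → K) (σ : V → Trm V K) : Prop :=
  (∀ u i, OuterPosCNF φ i → VarOccursAt φ u i → σ u = Trm.const (c i)) ∧
  (∀ u, (¬ ∃ i, OuterPosCNF φ i ∧ VarOccursAt φ u i) → σ u = Trm.var u)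

/-- A clause is inseparable if it is a single literal or some variable occurs in
every literal of the clause. -/
def InsepClause (C : Clause V K P) : Prop :=
  (∃ l, C = {l}) ∨ ∃ u : V, ∀ l ∈ C, l.hasVar u

/-- `Kc` is a component of a clause `C`: a non-empty inseparable subclause of `C`
closed under sharing variables with literals of `C`. -/
def IsComponent (Kc C : Clause V K P) : Prop :=
  Kc.Nonempty ∧ Kc ⊆ C ∧ InsepClause Kc ∧
    ∀ a ∈ Kc, ∀ b ∈ C, (∃ u : V, a.hasVar u ∧ b.hasVar u) → b ∈ Kc

/-- All variables shared between `l₁` and `l₂` occur as arguments in positions `≤ m`. -/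
def SharesUpTo (l₁ l₂ : Lit V K P) (m : ℕ) : Prop :=
  ∀ u : V, l₁.hasVar u → l₂.hasVar u →
    (∃ j ≤ m, l₁.varAt u j) ∧ (∃ j ≤ m, l₂.varAt u j)

/-- `i` is a fork index of `φ`: for some clause `C` of `φ` and literals `l₁, l₂` of
`C` (not necessarily distinct), `i` is the minimal value such that every variable
shared between `l₁` and `l₂` occurs at some argument position `≤ i`.  In particular,
`0` is a fork index if some such pair shares no variables. -/
def ForkIndex (φ : CNF V K P) (i : ℕ) : Prop :=
  ∃ C ∈ φ, ∃ l₁ ∈ C, ∃ l₂ ∈ C, IsLeast {m | SharesUpTo l₁ l₂ m} i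

/-- For a clause `C` satisfying the QEALM clause condition, some
variable occurs in every literal of `C` iff every pair of literals of `C` shares a
variable (in particular, taking the two literals equal, every literal of `C`
contains at least one variable). -/
theorem statement_16 [Nonempty V] (C : Clause V K P) (hC : QEALMClause C) :
    (∃ u : V, ∀ l ∈ C, l.hasVar u) ↔
      (∀ l₁ ∈ C, ∀ l₂ ∈ C, ∃ u : V, l₁.hasVar u ∧ l₂.hasVar u) := by
  constructor
  · rintro ⟨u, hu⟩ l₁ h₁ l₂ h₂
    exact ⟨u, hu l₁ h₁, hu l₂ h₂⟩
  · intro h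
    rcases C.eq_empty_or_nonempty with rfl | ⟨l₀, hl₀⟩
    · exact ⟨Classical.arbitrary V, fun l hl => absurd hl (Finset.notMem_empty l)⟩
    · obtain ⟨v₀, hv₀, -⟩ := h l₀ hl₀ l₀ hl₀
      have hex : ∃ i, ∃ u, l₀.varAt u i := let ⟨i, hi⟩ := hv₀; ⟨i, v₀, hi⟩
      classical
      obtain ⟨u, hu⟩ := Nat.find_spec hex
      refine ⟨u, fun l hl => ?_⟩
      obtain ⟨v, hv₁, hv₂⟩ := h l₀ hl₀ l hl
      obtain ⟨j, hj₁, hj₂, hagree⟩ := hC v l₀ hl₀ l hl hv₁ hv₂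
      have hij : Nat.find hex ≤ j := Nat.find_min' hex ⟨v, hj₁.1⟩
      have heq := hagree (Nat.find hex) hij
      exact ⟨Nat.find hex, by rw [Lit.varAt, ← heq]; exact hu⟩
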